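/- arXiv:1207.6735 — 2 statements merged into one kernel-verified Lean document; each statement's English description precedes it below -/
import Mathlib

section
/- Let X ⊆ [0,1] be a bounded set, let f ∈ P(X), δ₀ > 0, p > 0 and ε > 0. Then there exist δ₁ with 0 < δ₁ < δ₀ and g ∈ P(X) with g(x) > 0 for all x ∈ X and sup_{x∈X} |g(x)| < p, such that log N_{δ₁}(g+f) / (−log δ₁) ≥ limsup_{m→∞} log(g_m(X))/log m − ε. -/
open Set Filter

noncomputable section

/-- Number of cubes `[nδ,(n+1)δ]` of the standard `δ`-grid in `ℝ` meeting `E`. -/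
def boxCount (δ : ℝ) (E : Set ℝ) : ℕ :=
  Set.ncard {n : ℤ | (Set.Icc ((n : ℝ) * δ) ((n + 1) * δ) ∩ E).Nonempty}

/-- Number of cubes of the standard `δ`-grid in `ℝ²` meeting `E`. -/
def boxCount2 (δ : ℝ) (E : Set (ℝ × ℝ)) : ℕ :=
  Set.ncard {p : ℤ × ℤ |
    ((Set.Icc ((p.1 : ℝ) * δ) ((p.1 + 1) * δ) ×ˢ
      Set.Icc ((p.2 : ℝ) * δ) ((p.2 + 1) * δ)) ∩ E).Nonempty}

/-- Upper box dimension of a set `E ⊆ ℝ`. -/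
def upperBoxDim (E : Set ℝ) : ℝ :=
  Filter.limsup (fun δ : ℝ => Real.log (boxCount δ E) / (-Real.log δ))
    (nhdsWithin 0 (Set.Ioi 0))

/-- Upper box dimension of a set `E ⊆ ℝ²`. -/
def upperBoxDim2 (E : Set (ℝ × ℝ)) : ℝ :=
  Filter.limsup (fun δ : ℝ => Real.log (boxCount2 δ E) / (-Real.log δ))
    (nhdsWithin 0 (Set.Ioi 0))

/-- The graph of `f` over `X`, as a subset of `ℝ²`. -/
def graphOver (f : ℝ → ℝ) (X : Set ℝ) : Set (ℝ × ℝ) :=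
  {p : ℝ × ℝ | p.1 ∈ X ∧ p.2 = f p.1}

/-- `f` is (the restriction to `X` of) a bounded uniformly continuous function on `X`,
i.e. `f ∈ C_u(X)`. -/
def MemCu (f : ℝ → ℝ) (X : Set ℝ) : Prop :=
  UniformContinuousOn f X ∧ ∃ M : ℝ, ∀ x ∈ X, |f x| ≤ M

/-- The upper graph box dimension of `X`:
the supremum of the upper box dimensions of graphs of functions in `C_u(X)`. -/
def upperGraphBoxDim (X : Set ℝ) : ℝ :=
  sSup {d : ℝ | ∃ f : ℝ → ℝ, MemCu f X ∧ d = upperBoxDim2 (graphOver f X)}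

/-- `g_m(X) = Σ_{k=1}^m min{m, #(X ∩ [(k-1)/m, k/m])}`. -/
def gseq (X : Set ℝ) (m : ℕ) : ℕ :=
  ∑ k ∈ Finset.Icc 1 m,
    (min (m : ℕ∞) ((X ∩ Set.Icc (((k : ℝ) - 1) / m) ((k : ℝ) / m)).encard)).toNat

/-- `N_δ(f)` for a function `f` defined on `X`: the number of half-open grid squares
`[iδ,(i+1)δ) × [jδ,(j+1)δ)`, `i,j ∈ ℤ`, meeting the graph of `f` over `X`. -/
def gridCountGraph (δ : ℝ) (f : ℝ → ℝ) (X : Set ℝ) : ℕ :=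
  Set.ncard {p : ℤ × ℤ | ∃ x ∈ X,
    x ∈ Set.Ico ((p.1 : ℝ) * δ) ((p.1 + 1) * δ) ∧
    f x ∈ Set.Ico ((p.2 : ℝ) * δ) ((p.2 + 1) * δ)}

/-- A continuous piecewise-linear (polygonal) function on `[0,1]`. -/
def IsPolygonal (F : ℝ → ℝ) : Prop :=
  ContinuousOn F (Set.Icc 0 1) ∧
  ∃ (n : ℕ) (t : ℕ → ℝ), 0 < n ∧ t 0 = 0 ∧ t n = 1 ∧
    (∀ i < n, t i < t (i + 1)) ∧
    ∀ i < n, ∃ a b : ℝ, ∀ x ∈ Set.Icc (t i) (t (i + 1)), F x = a * x + b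

/-- `g ∈ P(X)`: `g` agrees on `X` with a polygonal function on `[0,1]`. -/
def MemPX (g : ℝ → ℝ) (X : Set ℝ) : Prop :=
  ∃ F : ℝ → ℝ, IsPolygonal F ∧ Set.EqOn g F X


/-!
Work on the grid of mesh `1/m`, with `m` chosen so that `log g_m(X) / log m` is close to the
limsup. In each column keep up to `K ≈ c m` points of `X` (`c` depending only on `p`) and rank the
kept points of a column lexicographically by `(f x, x)`. Lifting a kept point `x` to the centre of
row `⌈m f(x)⌉ + rank x` costs less than `(K + 1)/m < p` and sends distinct points of a column to
distinct squares, so the polygonal interpolation `g` of these lifts satisfies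
`N_{1/m}(g + f) ≥ ∑ₖ min(K, #column k) ≥ K g_m(X) / (2m)`. As `K/m ≥ c`, the logarithms of
`N_{1/m}(g + f)` and `g_m(X)` differ by `O(1) = o(log m)`.
-/

open Finset in
def linearInterp (t w : ℕ → ℝ) (n : ℕ) (x : ℝ) : ℝ :=
  w 0 + ∑ i ∈ range n,
    (w (i + 1) - w i) / (t (i + 1) - t i) * (min (max x (t i)) (t (i + 1)) - t i)

theorem continuous_linearInterp (t w : ℕ → ℝ) (n : ℕ) : Continuous (linearInterp t w n) := by
  unfold linearInterp
  fun_prop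

theorem StrictMonoOn.lt_add_one_of_Iic {β : Type*} [Preorder β] {t : ℕ → β} {n i : ℕ}
    (ht : StrictMonoOn t (Iic n)) (hi : i < n) : t i < t (i + 1) :=
  ht (mem_Iic.2 hi.le) (mem_Iic.2 hi) i.lt_succ_self

section linearInterp

variable {t : ℕ → ℝ} {n : ℕ} (ht : StrictMonoOn t (Iic n))
include ht

theorem linearInterp_eq_lineMap (w : ℕ → ℝ) {j : ℕ} (hj : j < n) {x : ℝ}
    (hx : x ∈ Icc (t j) (t (j + 1))) :
    linearInterp t w n x = AffineMap.lineMap (w j) (w (j + 1)) ((x - t j) / (t (j + 1) - t j)) := by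
  have hmono : ∀ ⦃a b⦄, a ≤ b → b ≤ n → t a ≤ t b := fun a b hab hb =>
    ht.monotoneOn (mem_Iic.2 (hab.trans hb)) (mem_Iic.2 hb) hab
  have hbelow : ∀ i ∈ Finset.range j, (w (i + 1) - w i) / (t (i + 1) - t i) *
      (min (max x (t i)) (t (i + 1)) - t i) = w (i + 1) - w i := by
    intro i hi
    have hi : i < j := Finset.mem_range.1 hi
    rw [max_eq_left ((hmono hi.le hj.le).trans hx.1),
      min_eq_right ((hmono hi hj.le).trans hx.1)]
    exact div_mul_cancel₀ _ (sub_pos.2 (ht.lt_add_one_of_Iic (hi.trans hj))).ne'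
  have habove : ∀ i ∈ Finset.Ico (j + 1) n, (w (i + 1) - w i) / (t (i + 1) - t i) *
      (min (max x (t i)) (t (i + 1)) - t i) = 0 := by
    intro i hi
    obtain ⟨hji, hin⟩ := Finset.mem_Ico.1 hi
    rw [max_eq_right (hx.2.trans (hmono hji hin.le)), min_eq_left (ht.lt_add_one_of_Iic hin).le,
      sub_self, mul_zero]
  rw [linearInterp, ← Finset.sum_range_add_sum_Ico _ hj, Finset.sum_range_succ,
    Finset.sum_congr rfl hbelow, Finset.sum_range_sub, Finset.sum_eq_zero habove,
    max_eq_left hx.1, min_eq_left hx.2, AffineMap.lineMap_apply_ring']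
  ring

theorem linearInterp_apply_of_le (w : ℕ → ℝ) (hn : 0 < n) {j : ℕ} (hj : j ≤ n) :
    linearInterp t w n (t j) = w j := by
  rcases hj.lt_or_eq with hj | rfl
  · rw [linearInterp_eq_lineMap ht w hj ⟨le_rfl, (ht.lt_add_one_of_Iic hj).le⟩, sub_self, zero_div,
      AffineMap.lineMap_apply_zero]
  · obtain ⟨k, rfl⟩ := Nat.exists_eq_succ_of_ne_zero hn.ne'
    have hk := ht.lt_add_one_of_Iic k.lt_succ_self
    rw [linearInterp_eq_lineMap ht w k.lt_succ_self ⟨hk.le, le_rfl⟩,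
      div_self (sub_pos.2 hk).ne', AffineMap.lineMap_apply_one]

theorem linearInterp_mem_uIcc (w : ℕ → ℝ) {j : ℕ} (hj : j < n) {x : ℝ}
    (hx : x ∈ Icc (t j) (t (j + 1))) : linearInterp t w n x ∈ uIcc (w j) (w (j + 1)) := by
  have hgap : 0 < t (j + 1) - t j := sub_pos.2 (ht.lt_add_one_of_Iic hj)
  rw [linearInterp_eq_lineMap ht w hj hx, ← segment_eq_uIcc, segment_eq_image_lineMap]
  exact mem_image_of_mem _ ⟨div_nonneg (sub_nonneg.2 hx.1) hgap.le,
    (div_le_one hgap).2 (by linarith [hx.2])⟩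

theorem isPolygonal_linearInterp (w : ℕ → ℝ) (hn : 0 < n) (ht0 : t 0 = 0) (htn : t n = 1) :
    IsPolygonal (linearInterp t w n) := by
  refine ⟨(continuous_linearInterp t w n).continuousOn, n, t, hn, ht0, htn,
    fun i hi => ht.lt_add_one_of_Iic hi, fun j hj => ?_⟩
  refine ⟨(w (j + 1) - w j) / (t (j + 1) - t j),
    w j - (w (j + 1) - w j) / (t (j + 1) - t j) * t j, fun x hx => ?_⟩
  rw [linearInterp_eq_lineMap ht w hj hx, AffineMap.lineMap_apply_ring']
  ring

end linearInterp

theorem exists_mem_Icc_succ_of_mem_Icc {β : Type*} [LinearOrder β] {t : ℕ → β} {n : ℕ} (hn : 0 < n)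
    {x : β} (hx : x ∈ Icc (t 0) (t n)) : ∃ j < n, x ∈ Icc (t j) (t (j + 1)) := by
  induction n with
  | zero => omega
  | succ n ih =>
    rcases le_or_gt x (t n) with h | h
    · rcases Nat.eq_zero_or_pos n with rfl | hn
      · exact ⟨0, Nat.zero_lt_one, hx⟩
      · obtain ⟨j, hj, hmem⟩ := ih hn ⟨hx.1, h⟩
        exact ⟨j, hj.trans n.lt_succ_self, hmem⟩
    · exact ⟨n, n.lt_succ_self, h.le, hx.2⟩

theorem Finset.exists_strictMonoOn_bijOn {α : Type*} [LinearOrder α] (D : Finset α) {n : ℕ}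
    (hn : D.card = n + 1) : ∃ t : ℕ → α, StrictMonoOn t (Set.Iic n) ∧ BijOn t (Set.Iic n) D := by
  set e := D.orderIsoOfFin hn
  have ht : StrictMonoOn (fun i => (e ⟨min i n, by omega⟩ : α)) (Set.Iic n) := by
    intro i hi j hj hij
    have hi : i ≤ n := hi
    have hj : j ≤ n := hj
    exact e.strictMono (Fin.mk_lt_mk.2 (by omega))
  refine ⟨_, ht, fun i _ => (e _).2, ht.injOn,
    fun x hx => ⟨e.symm ⟨x, hx⟩, Nat.lt_succ_iff.1 (e.symm ⟨x, hx⟩).2, ?_⟩⟩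
  have hle : ((e.symm ⟨x, hx⟩ : Fin (n + 1)) : ℕ) ≤ n := Nat.lt_succ_iff.1 (e.symm _).2
  simp only [min_eq_left hle, Fin.eta, OrderIso.apply_symm_apply]

theorem exists_isPolygonal_eqOn (D : Finset ℝ) (hD : ↑D ⊆ Icc (0 : ℝ) 1) {s : Set ℝ}
    (hs : s.OrdConnected) (v : ℝ → ℝ) (hv : ∀ x, v x ∈ s) :
    ∃ F, IsPolygonal F ∧ EqOn F v D ∧ MapsTo F (Icc 0 1) s := by
  classical
  set D' := insert 0 (insert 1 D)
  have hD' : ∀ x ∈ D', x ∈ Icc (0 : ℝ) 1 := by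
    simp only [D', Finset.mem_insert]
    rintro x (rfl | rfl | hx)
    exacts [⟨le_rfl, zero_le_one⟩, ⟨zero_le_one, le_rfl⟩, hD hx]
  obtain ⟨t, ht, htD, -, hDt⟩ := D'.exists_strictMonoOn_bijOn (n := D'.card - 1)
    (Nat.succ_pred_eq_of_pos (Finset.card_pos.2 ⟨0, Finset.mem_insert_self _ _⟩)).symm
  set n := D'.card - 1
  have ht0 : t 0 = 0 := by
    obtain ⟨j, hj, hj0⟩ := hDt (Finset.mem_insert_self 0 _)
    exact le_antisymm (hj0 ▸ ht.monotoneOn (Nat.zero_le _) hj (Nat.zero_le j))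
      (hD' _ (htD (Nat.zero_le n))).1
  have htn : t n = 1 := by
    obtain ⟨j, hj, hj1⟩ := hDt (Finset.mem_insert_of_mem (Finset.mem_insert_self 1 _))
    exact le_antisymm (hD' _ (htD (le_refl n))).2
      (hj1 ▸ ht.monotoneOn hj (le_refl n) hj)
  have hn : 0 < n := Nat.pos_of_ne_zero fun h => by simp [h, ht0] at htn
  refine ⟨linearInterp t (v ∘ t) n, isPolygonal_linearInterp ht _ hn ht0 htn, fun x hx => ?_,
    fun x hx => ?_⟩
  · obtain ⟨j, hj, rfl⟩ := hDt (Finset.mem_insert_of_mem (Finset.mem_insert_of_mem hx))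
    exact linearInterp_apply_of_le ht _ hn hj
  · rw [← ht0, ← htn] at hx
    obtain ⟨j, hj, hxj⟩ := exists_mem_Icc_succ_of_mem_Icc hn hx
    have hF := linearInterp_mem_uIcc ht (v ∘ t) hj hxj
    exact hs.uIcc_subset (hv _) (hv _) hF

def gridCell (δ : ℝ) (h : ℝ → ℝ) (x : ℝ) : ℤ × ℤ := (⌊x / δ⌋, ⌊h x / δ⌋)

section gridCell

variable {δ : ℝ} (hδ : 0 < δ)
include hδ

theorem floor_div_eq_iff_mem_Ico {x : ℝ} {i : ℤ} :
    ⌊x / δ⌋ = i ↔ x ∈ Ico (i * δ) ((i + 1) * δ) := by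
  rw [Int.floor_eq_iff, le_div_iff₀ hδ, div_lt_iff₀ hδ, mem_Ico]

theorem gridCountGraph_eq_ncard_image (h : ℝ → ℝ) (X : Set ℝ) :
    gridCountGraph δ h X = (gridCell δ h '' X).ncard := by
  unfold gridCountGraph gridCell
  congr 1
  ext ⟨i, j⟩
  simp only [mem_ofPred_eq, mem_image, Prod.mk.injEq, ← floor_div_eq_iff_mem_Ico hδ]

theorem finite_image_gridCell {h : ℝ → ℝ} {X : Set ℝ} {a b c d : ℝ} (hX : X ⊆ Icc a b)
    (hh : MapsTo h X (Icc c d)) : (gridCell δ h '' X).Finite := by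
  refine ((finite_Icc ⌊a / δ⌋ ⌊b / δ⌋).prod (finite_Icc ⌊c / δ⌋ ⌊d / δ⌋)).subset ?_
  rintro _ ⟨x, hx, rfl⟩
  have floor_mem : ∀ {y l u : ℝ}, y ∈ Icc l u → ⌊y / δ⌋ ∈ Icc ⌊l / δ⌋ ⌊u / δ⌋ := fun hy =>
    ⟨Int.floor_mono (div_le_div_of_nonneg_right hy.1 hδ.le),
      Int.floor_mono (div_le_div_of_nonneg_right hy.2 hδ.le)⟩
  exact ⟨floor_mem (hX hx), floor_mem (hh hx)⟩

theorem card_le_gridCountGraph {h : ℝ → ℝ} {X : Set ℝ} {a b c d : ℝ} (hX : X ⊆ Icc a b)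
    (hh : MapsTo h X (Icc c d)) {U : Finset ℝ} (hUX : ↑U ⊆ X) (hU : InjOn (gridCell δ h) U) :
    U.card ≤ gridCountGraph δ h X := by
  rw [gridCountGraph_eq_ncard_image hδ, ← ncard_coe_finset, ← hU.ncard_image]
  exact ncard_le_ncard (image_mono hUX) (finite_image_gridCell hδ hX hh)

end gridCell

section columns

open Finset

variable {α ι : Type*} [DecidableEq ι]

theorem exists_finset_card_eq_sum_min [DecidableEq α] (X : Set α) (κ : α → ι) (K : ℕ)
    (I : Finset ι) : ∃ U : Finset α, ↑U ⊆ X ∧ (∀ i, #{x ∈ U | κ x = i} ≤ K) ∧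
      (#U : ℕ∞) = ∑ i ∈ I, min (K : ℕ∞) {x ∈ X | κ x = i}.encard := by
  choose T hTsub hTcard using fun i =>
    exists_subset_encard_eq (min_le_right (K : ℕ∞) {x ∈ X | κ x = i}.encard)
  have hTfin : ∀ i, (T i).Finite := fun i =>
    finite_of_encard_le_coe ((hTcard i).trans_le (min_le_left _ _))
  have hκ : ∀ {i x}, x ∈ (hTfin i).toFinset → κ x = i := fun hx =>
    (hTsub _ ((hTfin _).mem_toFinset.1 hx)).2
  refine ⟨I.biUnion fun i => (hTfin i).toFinset, ?_, fun i => ?_, ?_⟩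
  · simp only [coe_biUnion, Set.iUnion_subset_iff]
    exact fun i _ x hx => (hTsub i ((hTfin i).mem_toFinset.1 hx)).1
  · have hsub : {x ∈ I.biUnion fun i => (hTfin i).toFinset | κ x = i} ⊆ (hTfin i).toFinset := by
      intro x hx
      obtain ⟨hxU, rfl⟩ := mem_filter.1 hx
      obtain ⟨j, -, hxj⟩ := mem_biUnion.1 hxU
      rwa [hκ hxj]
    have hcard : (#(hTfin i).toFinset : ℕ∞) ≤ K := by
      rw [← (hTfin i).encard_eq_coe_toFinset_card, hTcard]
      exact min_le_left _ _
    exact (Finset.card_le_card hsub).trans (by exact_mod_cast hcard)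
  · rw [card_biUnion fun i _ j _ hij => disjoint_left.2 fun x hi hj => hij ((hκ hi).symm.trans
      (hκ hj))]
    push_cast
    refine sum_congr rfl fun i _ => ?_
    rw [← (hTfin i).encard_eq_coe_toFinset_card, hTcard]

theorem exists_rank_injOn {β : Type*} [LinearOrder β] (U : Finset α) (κ : α → ι) {K : ℕ}
    (hK : ∀ i, #{x ∈ U | κ x = i} ≤ K) (φ : α → β) (hφ : Function.Injective φ) (ψ : α → ℤ)
    (hψ : ∀ x y, φ x ≤ φ y → ψ x ≤ ψ y) :
    ∃ r : α → ℕ, (∀ x ∈ U, r x < K) ∧ InjOn (fun x => (κ x, ψ x + r x)) U := by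
  set r : α → ℕ := fun x => #{y ∈ U | κ y = κ x ∧ φ y < φ x}
  have rank_lt : ∀ x ∈ U, ∀ y ∈ U, κ x = κ y → φ x < φ y → r x < r y := by
    intro x hx y hy hxy hφxy
    refine Finset.card_lt_card ⟨fun z hz => ?_, fun hsub => ?_⟩
    · obtain ⟨hzU, hzκ, hzφ⟩ := mem_filter.1 hz
      exact mem_filter.2 ⟨hzU, hzκ.trans hxy, hzφ.trans hφxy⟩
    · exact (mem_filter.1 (hsub (mem_filter.2 ⟨hx, hxy, hφxy⟩))).2.2.false
  refine ⟨r, fun x hx => ?_, fun x hx y hy hxy => ?_⟩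
  · refine (Finset.card_lt_card ⟨fun z hz => ?_, fun hsub => ?_⟩).trans_le (hK (κ x))
    · exact mem_filter.2 ⟨(mem_filter.1 hz).1, (mem_filter.1 hz).2.1⟩
    · exact (mem_filter.1 (hsub (mem_filter.2 ⟨hx, rfl⟩))).2.2.false
  obtain ⟨hκ, hrow⟩ := Prod.mk.inj hxy
  by_contra hne
  rcases lt_or_gt_of_ne (hφ.ne hne) with h | h
  · have := rank_lt x hx y hy hκ h
    have := hψ x y h.le
    omega
  · have := rank_lt y hy x hx hκ.symm h
    have := hψ y x h.le
    omega

end columns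

theorem ceil_div_add_half_mul_sub_mem_Ioo {y δ : ℝ} (hδ : 0 < δ) {r K : ℕ} (hr : r < K) :
    (⌈y / δ⌉ + r + 1 / 2) * δ - y ∈ Ioo 0 ((K + 1) * δ) := by
  have hc := Int.le_ceil (y / δ)
  have hc' := Int.ceil_lt_add_one (y / δ)
  have hr : (r : ℝ) + 1 ≤ K := by exact_mod_cast hr
  have hy : (⌈y / δ⌉ + r + 1 / 2) * δ - y = (⌈y / δ⌉ - y / δ + r + 1 / 2) * δ := by
    field_simp
    ring
  rw [hy]
  exact ⟨mul_pos (by positivity) hδ, mul_lt_mul_of_pos_right (by linarith) hδ⟩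

theorem exists_polygonal_sum_min_le_gridCountGraph {X : Set ℝ} (hX : X ⊆ Icc 0 1) {f : ℝ → ℝ}
    {M : ℝ} (hM : ∀ x ∈ X, |f x| ≤ M) {δ : ℝ} (hδ : 0 < δ) (K : ℕ) (I : Finset ℤ) :
    ∃ g, MemPX g X ∧ MapsTo g (Icc 0 1) (Ioo 0 ((K + 1) * δ)) ∧
      ∑ i ∈ I, min (K : ℕ∞) {x ∈ X | ⌊x / δ⌋ = i}.encard ≤ gridCountGraph δ (g + f) X := by
  classical
  obtain ⟨U, hUX, hUK, hUcard⟩ := exists_finset_card_eq_sum_min X (fun x => ⌊x / δ⌋) K I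
  have hψ : ∀ x y, toLex (f x, x) ≤ toLex (f y, y) → ⌈f x / δ⌉ ≤ ⌈f y / δ⌉ := fun x y hxy =>
    Int.ceil_mono (div_le_div_of_nonneg_right
      ((Prod.Lex.toLex_le_toLex.1 hxy).elim le_of_lt fun h => h.1.le) hδ.le)
  obtain ⟨r, hrK, hinj⟩ := exists_rank_injOn U _ hUK (fun x => toLex (f x, x))
    (fun x y hxy => congrArg Prod.snd (toLex.injective hxy)) _ hψ
  set v : ℝ → ℝ := fun x => if x ∈ U then (⌈f x / δ⌉ + r x + 1 / 2) * δ - f x else δ / 2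
  have hv : ∀ x, v x ∈ Ioo 0 ((K + 1) * δ) := by
    intro x
    by_cases hx : x ∈ U
    · simpa only [v, if_pos hx] using ceil_div_add_half_mul_sub_mem_Ioo hδ (hrK x hx)
    · simp only [v, if_neg hx]
      constructor <;> nlinarith [(K.cast_nonneg : (0 : ℝ) ≤ K)]
  obtain ⟨g, hg, hgv, hgI⟩ := exists_isPolygonal_eqOn U (hUX.trans hX) ordConnected_Ioo v hv
  have hcell : EqOn (fun x => (⌊x / δ⌋, ⌈f x / δ⌉ + (r x : ℤ))) (gridCell δ (g + f)) U := by
    intro x hx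
    have hgfx : (g + f) x = ((⌈f x / δ⌉ + r x : ℤ) + 1 / 2) * δ := by
      rw [Pi.add_apply, hgv hx]
      simp only [v, if_pos (Finset.mem_coe.1 hx)]
      push_cast
      ring
    simp only [gridCell, hgfx, mul_div_cancel_right₀ _ hδ.ne', Int.floor_intCast_add]
    norm_num
  have hgf : MapsTo (g + f) X (Icc (-M) ((K + 1) * δ + M)) := fun x hx => by
    have hgx := hgI (hX hx)
    have hfx := abs_le.1 (hM x hx)
    rw [Pi.add_apply]
    exact ⟨by linarith [hgx.1, hfx.1], by linarith [hgx.2, hfx.2]⟩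
  refine ⟨g, ⟨g, hg, eqOn_refl _ _⟩, hgI, ?_⟩
  rw [← hUcard]
  exact_mod_cast card_le_gridCountGraph hδ hX hgf hUX (hinj.congr hcell)

theorem min_add_le_min_add_min {α : Type*} [AddCommMonoid α] [LinearOrder α]
    [CanonicallyOrderedAdd α] (m a b : α) : min m (a + b) ≤ min m a + min m b := by
  rcases le_total m a with ha | ha
  · exact (min_le_left _ _).trans ((min_eq_left ha).ge.trans le_self_add)
  rcases le_total m b with hb | hb
  · exact (min_le_left _ _).trans ((min_eq_left hb).ge.trans le_add_self)
  rw [min_eq_right ha, min_eq_right hb]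
  exact min_le_right _ _

theorem mul_min_le_mul_min {α : Type*} [CommSemiring α] [LinearOrder α] [IsOrderedRing α]
    [CanonicallyOrderedAdd α] {K m : α} (h : K ≤ m) (a : α) : K * min m a ≤ m * min K a := by
  rcases le_total K a with hK | hK
  · rw [min_eq_left hK, mul_comm m]
    gcongr
    exact min_le_left _ _
  · rw [min_eq_right hK]
    calc K * min m a ≤ K * a := by gcongr; exact min_le_right _ _
      _ ≤ m * a := by gcongr

theorem Int.floor_eq_or_eq_add_one {R : Type*} [Ring R] [LinearOrder R] [IsStrictOrderedRing R]
    [FloorRing R] {r : R} {i : ℤ} (h : r ∈ Icc (i : R) (i + 1)) :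
    ⌊r⌋ = i ∨ ⌊r⌋ = i + 1 := by
  have h₁ := Int.le_floor.2 h.1
  have h₂ : ⌊r⌋ ≤ i + 1 := Int.floor_le_iff.2 (by push_cast; exact h.2.trans_lt (lt_add_one _))
  omega

theorem natCast_gseq (X : Set ℝ) (m : ℕ) : (gseq X m : ℕ∞) = ∑ i ∈ Finset.range m,
    min (m : ℕ∞) (X ∩ Icc ((i : ℝ) / m) ((i + 1) / m)).encard := by
  rw [gseq, Nat.cast_sum, ← Finset.Ico_add_one_right_eq_Icc, Finset.sum_Ico_eq_sum_range,
    Nat.add_sub_cancel]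
  refine Finset.sum_congr rfl fun i _ => ?_
  rw [ENat.natCast_toNat (ne_top_of_le_ne_top (ENat.natCast_ne_top m) (min_le_left _ _))]
  push_cast
  ring_nf

theorem inter_Icc_div_subset_union (X : Set ℝ) {m : ℕ} (hm : 0 < m) (i : ℕ) :
    X ∩ Icc ((i : ℝ) / m) ((i + 1) / m) ⊆
      {x ∈ X | ⌊x * m⌋ = i} ∪ {x ∈ X | ⌊x * m⌋ = (i + 1 : ℕ)} := by
  rintro x ⟨hxX, hx⟩
  rw [mem_Icc, div_le_iff₀ (Nat.cast_pos.2 hm), le_div_iff₀ (Nat.cast_pos.2 hm)] at hx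
  rcases Int.floor_eq_or_eq_add_one (r := x * m) (i := i) (by exact_mod_cast hx) with h | h
  · exact Or.inl ⟨hxX, h⟩
  · exact Or.inr ⟨hxX, by exact_mod_cast h⟩

theorem mul_gseq_le (X : Set ℝ) {K m : ℕ} (hKm : K ≤ m) :
    (K * gseq X m : ℕ∞) ≤
      2 * m * ∑ i ∈ Finset.range (m + 1), min (K : ℕ∞) {x ∈ X | ⌊x * m⌋ = i}.encard := by
  set col : ℕ → Set ℝ := fun i => {x ∈ X | ⌊x * m⌋ = i}
  set S := fun i => min (K : ℕ∞) (col i).encard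
  have hterm : ∀ i < m, (K : ℕ∞) * min (m : ℕ∞) (X ∩ Icc ((i : ℝ) / m) ((i + 1) / m)).encard ≤
      m * (S i + S (i + 1)) := fun i hi =>
    calc _ ≤ (K : ℕ∞) * (min (m : ℕ∞) (col i).encard + min (m : ℕ∞) (col (i + 1)).encard) := by
          gcongr
          exact (min_le_min_left _ ((encard_le_encard (inter_Icc_div_subset_union X
            (Nat.zero_lt_of_lt hi) i)).trans (encard_union_le _ _))).trans
            (min_add_le_min_add_min _ _ _)
      _ ≤ _ := by
          rw [mul_add, mul_add]
          exact add_le_add (mul_min_le_mul_min (by exact_mod_cast hKm) _)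
            (mul_min_le_mul_min (by exact_mod_cast hKm) _)
  calc (K * gseq X m : ℕ∞)
      = ∑ i ∈ Finset.range m,
          (K : ℕ∞) * min (m : ℕ∞) (X ∩ Icc ((i : ℝ) / m) ((i + 1) / m)).encard := by
        rw [natCast_gseq, Finset.mul_sum]
    _ ≤ ∑ i ∈ Finset.range m, m * (S i + S (i + 1)) :=
        Finset.sum_le_sum fun i hi => hterm i (Finset.mem_range.1 hi)
    _ ≤ 2 * m * ∑ i ∈ Finset.range (m + 1), S i := by
        rw [← Finset.mul_sum, Finset.sum_add_distrib, mul_comm 2, mul_assoc, two_mul]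
        gcongr _ * (?_ + ?_)
        · exact Finset.sum_le_sum_of_subset (Finset.range_mono m.le_succ)
        · rw [Finset.sum_range_succ' S]
          exact le_self_add

theorem MemPX.exists_abs_le {f : ℝ → ℝ} {X : Set ℝ} (hf : MemPX f X) (hX : X ⊆ Icc 0 1) :
    ∃ M, ∀ x ∈ X, |f x| ≤ M := by
  obtain ⟨F, ⟨hFc, -⟩, hfF⟩ := hf
  obtain ⟨M, hM⟩ := isCompact_Icc.exists_bound_of_continuousOn hFc
  exact ⟨M, fun x hx => hfF hx ▸ hM x (hX hx)⟩

theorem exists_polygonal_mul_gseq_le {X : Set ℝ} (hX : X ⊆ Icc 0 1) {f : ℝ → ℝ} {M : ℝ}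
    (hM : ∀ x ∈ X, |f x| ≤ M) {K m : ℕ} (hm : 0 < m) (hKm : K ≤ m) :
    ∃ g, MemPX g X ∧ MapsTo g (Icc 0 1) (Ioo 0 ((K + 1) * (m : ℝ)⁻¹)) ∧
      K * gseq X m ≤ 2 * m * gridCountGraph (m : ℝ)⁻¹ (g + f) X := by
  obtain ⟨g, hg, hgI, hN⟩ := exists_polygonal_sum_min_le_gridCountGraph hX hM
    (inv_pos.2 (Nat.cast_pos.2 hm)) K ((Finset.range (m + 1)).map Nat.castEmbedding)
  refine ⟨g, hg, hgI, ?_⟩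
  simp only [Finset.sum_map, Nat.castEmbedding_apply, div_inv_eq_mul] at hN
  have : (K * gseq X m : ℕ∞) ≤ 2 * m * gridCountGraph (m : ℝ)⁻¹ (g + f) X :=
    (mul_gseq_le X hKm).trans (by gcongr)
  exact_mod_cast this

theorem exists_pos_eventually_gseq_le_mul_gridCountGraph {X : Set ℝ} (hX : X ⊆ Icc 0 1)
    {f : ℝ → ℝ} {M : ℝ} (hM : ∀ x ∈ X, |f x| ≤ M) {p : ℝ} (hp : 0 < p) :
    ∃ C > 0, ∀ᶠ m : ℕ in atTop, ∃ g, MemPX g X ∧ MapsTo g (Icc 0 1) (Ioo 0 p) ∧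
      (gseq X m : ℝ) ≤ C * gridCountGraph (m : ℝ)⁻¹ (g + f) X := by
  set a := min 1 (p / 4)
  have ha : 0 < a := lt_min one_pos (by positivity)
  refine ⟨2 / a, div_pos two_pos ha, ?_⟩
  filter_upwards [tendsto_natCast_atTop_atTop.eventually_ge_atTop (4 / p)] with m hmp
  have hm : (0 : ℝ) < m := (div_pos four_pos hp).trans_le hmp
  set K := ⌈a * m⌉₊
  have haK : a * m ≤ K := Nat.le_ceil _
  have hKm : K ≤ m := Nat.ceil_le.2 (mul_le_of_le_one_left hm.le (min_le_left _ _))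
  obtain ⟨g, hg, hgI, hgN⟩ := exists_polygonal_mul_gseq_le hX hM (Nat.cast_pos.1 hm) hKm
  have hK : (K + 1) * (m : ℝ)⁻¹ ≤ p := by
    rw [← div_eq_mul_inv, div_le_iff₀ hm]
    have := Nat.ceil_lt_add_one (mul_nonneg ha.le hm.le)
    have : a ≤ p / 4 := min_le_right _ _
    have : 4 ≤ p * m := (div_le_iff₀' hp).1 hmp
    nlinarith
  refine ⟨g, hg, fun x hx => Ioo_subset_Ioo_right hK (hgI hx), ?_⟩
  have hgN : (K : ℝ) * gseq X m ≤ 2 * m * gridCountGraph (m : ℝ)⁻¹ (g + f) X := by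
    exact_mod_cast hgN
  rw [div_mul_eq_mul_div, le_div_iff₀ ha]
  nlinarith [Nat.cast_nonneg (α := ℝ) (gseq X m)]

theorem sub_le_log_div_of_le_mul {G N : ℕ} {C ℓ L ε : ℝ} (hℓ : 0 < ℓ) (hε : 0 < ε) (hC : 0 < C)
    (hGN : (G : ℝ) ≤ C * N) (hG : (L - ε / 2) * ℓ < Real.log G) (hCℓ : Real.log C ≤ ε / 2 * ℓ) :
    L - ε ≤ Real.log N / ℓ := by
  rw [le_div_iff₀ hℓ]
  rcases G.eq_zero_or_pos with rfl | hG₀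
  · rw [Nat.cast_zero, Real.log_zero] at hG
    nlinarith [Real.log_natCast_nonneg N]
  have hG₀ : (0 : ℝ) < G := Nat.cast_pos.2 hG₀
  have hN : (0 : ℝ) < N := pos_of_mul_pos_right (hG₀.trans_le hGN) hC.le
  have := Real.log_le_log hG₀ hGN
  rw [Real.log_mul hC.ne' hN.ne'] at this
  nlinarith

theorem exists_polygonal_perturbation (X : Set ℝ) (hX : X ⊆ Set.Icc 0 1)
    (f : ℝ → ℝ) (hf : MemPX f X) (δ₀ p ε : ℝ) (hδ₀ : 0 < δ₀) (hp : 0 < p) (hε : 0 < ε) :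
    ∃ δ₁ : ℝ, 0 < δ₁ ∧ δ₁ < δ₀ ∧
      ∃ g : ℝ → ℝ, MemPX g X ∧ (∀ x ∈ X, 0 < g x) ∧ (⨆ x : X, |g x|) < p ∧
        Real.log (gridCountGraph δ₁ (g + f) X) / (-Real.log δ₁) ≥
          Filter.limsup (fun m : ℕ => Real.log (gseq X m) / Real.log m) Filter.atTop - ε := by
  obtain ⟨M, hM⟩ := hf.exists_abs_le hX
  obtain ⟨C, hC, hgood⟩ := exists_pos_eventually_gseq_le_mul_gridCountGraph hX hM (half_pos hp)
  set L := limsup (fun m : ℕ => Real.log (gseq X m) / Real.log m) atTop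
  have hfreq : ∃ᶠ m : ℕ in atTop, L - ε / 2 < Real.log (gseq X m) / Real.log m :=
    frequently_lt_of_lt_limsup (isCoboundedUnder_le_of_le atTop fun m =>
      div_nonneg (Real.log_natCast_nonneg _) (Real.log_natCast_nonneg _)) (by linarith)
  have hlog : Tendsto (fun m : ℕ => Real.log m) atTop atTop :=
    Real.tendsto_log_atTop.comp tendsto_natCast_atTop_atTop
  obtain ⟨m, hmu, ⟨g, hg, hgI, hgN⟩, hm, hmδ, hmC⟩ := (hfreq.and_eventually (hgood.and
    ((hlog.eventually_gt_atTop 0).and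
    (((tendsto_inv_atTop_nhds_zero_nat (𝕜 := ℝ)).eventually (gt_mem_nhds hδ₀)).and
    (hlog.eventually_ge_atTop (2 * Real.log C / ε)))))).exists
  have hm₀ : (0 : ℝ) < m := zero_lt_one.trans ((Real.log_pos_iff (Nat.cast_nonneg m)).1 hm)
  refine ⟨(m : ℝ)⁻¹, inv_pos.2 hm₀, hmδ, g, hg, fun x hx => (hgI (hX hx)).1, ?_, ?_⟩
  · refine (Real.iSup_le (fun x => ?_) (half_pos hp).le).trans_lt (half_lt_self hp)
    exact (abs_of_pos (hgI (hX x.2)).1).trans_le (hgI (hX x.2)).2.le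
  · rw [ge_iff_le, Real.log_inv, neg_neg]
    exact sub_le_log_div_of_le_mul hm hε hC hgN ((lt_div_iff₀ hm).1 hmu)
      (by linarith [(div_le_iff₀ hε).1 hmC])
end
end

section
/- Let p > 1 and A = {1/n^p : n ∈ ℕ, n ≥ 1}. Then the upper graph box dimension of A equals 1. -/
open Set Filter

noncomputable section

/-!
At scale `δ`, the points `1 / n ^ p ≥ δ` of `A` number at most `δ⁻¹` (as `p ≥ 1`), each lying in
at most four grid squares, and the rest of `A` lies in `[0, δ]`, above which a graph bounded by `M`
meets `O(M / δ)` squares. Hence `N_δ(graph f) = O(1 / δ)` for every bounded `f`, and every graph has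
upper box dimension at most `1`.

Conversely, for `f x = x ^ s` the values `f (1 / n ^ p) = n ^ (-t)`, `t = p s`, `1 ≤ n ≤ L`, are
pairwise at least `t L ^ (-(1 + t))` apart, so at the scale `δ = L ^ (-(1 + 2 t))` they lie in `L`
distinct squares as soon as `t L ^ t ≥ 1`. These graphs have dimension at least `1 / (1 + 2 t)`,
which tends to `1` as `s → 0`.
-/

open Topology

def hitCells (δ : ℝ) (E : Set (ℝ × ℝ)) : Set (ℤ × ℤ) :=
  {q : ℤ × ℤ | ((Icc ((q.1 : ℝ) * δ) ((q.1 + 1) * δ) ×ˢ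
    Icc ((q.2 : ℝ) * δ) ((q.2 + 1) * δ)) ∩ E).Nonempty}

theorem boxCount2_eq_ncard_hitCells (δ : ℝ) (E : Set (ℝ × ℝ)) :
    boxCount2 δ E = (hitCells δ E).ncard :=
  rfl

theorem mem_Icc_floor_div {δ : ℝ} (hδ : 0 < δ) (y : ℝ) :
    y ∈ Icc ((⌊y / δ⌋ : ℝ) * δ) ((⌊y / δ⌋ + 1) * δ) :=
  ⟨(le_div_iff₀ hδ).mp (Int.floor_le _), (div_le_iff₀ hδ).mp (Int.lt_floor_add_one _).le⟩

/-- Closed grid intervals overlap at their endpoints, hence the `- 1`. -/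
def cellRange (δ a b : ℝ) : Finset ℤ :=
  Finset.Icc (⌊a / δ⌋ - 1) ⌊b / δ⌋

theorem mem_cellRange {δ a b z : ℝ} (hδ : 0 < δ) {i : ℤ} (hz : z ∈ Icc a b)
    (hi : z ∈ Icc ((i : ℝ) * δ) ((i + 1) * δ)) : i ∈ cellRange δ a b := by
  have hlow : ⌊a / δ⌋ < i + 2 := by
    rw [Int.floor_lt, div_lt_iff₀ hδ]
    push_cast
    nlinarith [hz.1, hi.2]
  have hupp : i ≤ ⌊b / δ⌋ := by
    rw [Int.le_floor, le_div_iff₀ hδ]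
    linarith [hz.2, hi.1]
  exact Finset.mem_Icc.mpr ⟨by omega, hupp⟩

theorem card_cellRange_le {δ a b : ℝ} (hδ : 0 < δ) (hab : a ≤ b) :
    ((cellRange δ a b).card : ℝ) ≤ (b - a) / δ + 3 := by
  have hfloor : ⌊a / δ⌋ ≤ ⌊b / δ⌋ := Int.floor_mono (div_le_div_of_nonneg_right hab hδ.le)
  have hcard : ((cellRange δ a b).card : ℤ) = ⌊b / δ⌋ + 2 - ⌊a / δ⌋ := by
    rw [cellRange, Int.card_Icc, Int.toNat_of_nonneg (by omega)]
    ring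
  have hcard' : ((cellRange δ a b).card : ℝ) = ⌊b / δ⌋ + 2 - ⌊a / δ⌋ := by exact_mod_cast hcard
  rw [hcard', sub_div]
  linarith [Int.floor_le (b / δ), Int.lt_floor_add_one (a / δ)]

theorem card_cellRange_self (δ x : ℝ) : (cellRange δ x x).card = 2 := by
  rw [cellRange, Int.card_Icc]
  omega

theorem hitCells_graphOver_subset {δ M : ℝ} (hδ : 0 < δ) {f : ℝ → ℝ} {X : Set ℝ} {S : Finset ℝ}
    (hX : X ⊆ Icc 0 δ ∪ S) (hM : ∀ x ∈ X, |f x| ≤ M) :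
    hitCells δ (graphOver f X) ⊆
      ↑(cellRange δ 0 δ ×ˢ cellRange δ (-M) M ∪
        S.biUnion fun x => cellRange δ x x ×ˢ cellRange δ (f x) (f x)) := by
  rintro q ⟨z, ⟨hz₁, hz₂⟩, hzX, hzf⟩
  rw [hzf] at hz₂
  rw [Finset.coe_union, Set.mem_union, Finset.mem_coe, Finset.mem_coe]
  rcases hX hzX with hsmall | hS
  · exact Or.inl (Finset.mem_product.mpr
      ⟨mem_cellRange hδ hsmall hz₁, mem_cellRange hδ (abs_le.mp (hM _ hzX)) hz₂⟩)
  · exact Or.inr (Finset.mem_biUnion.mpr ⟨z.1, hS, Finset.mem_product.mpr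
      ⟨mem_cellRange hδ ⟨le_rfl, le_rfl⟩ hz₁, mem_cellRange hδ ⟨le_rfl, le_rfl⟩ hz₂⟩⟩)

theorem ncard_hitCells_graphOver_le {δ M : ℝ} (hδ : 0 < δ) (hM0 : 0 ≤ M) {f : ℝ → ℝ}
    {X : Set ℝ} {S : Finset ℝ} (hX : X ⊆ Icc 0 δ ∪ S) (hM : ∀ x ∈ X, |f x| ≤ M) :
    ((hitCells δ (graphOver f X)).ncard : ℝ) ≤ 4 * (2 * M / δ + 3) + 4 * S.card := by
  have hsub := hitCells_graphOver_subset hδ hX hM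
  have hcol : ((cellRange δ 0 δ ×ˢ cellRange δ (-M) M).card : ℝ) ≤ 4 * (2 * M / δ + 3) := by
    rw [Finset.card_product, Nat.cast_mul]
    have h₁ := card_cellRange_le hδ hδ.le (a := 0)
    have h₂ := card_cellRange_le hδ (by linarith : -M ≤ M)
    rw [sub_zero, div_self hδ.ne'] at h₁
    rw [sub_neg_eq_add, ← two_mul] at h₂
    exact mul_le_mul (by linarith) h₂ (Nat.cast_nonneg _) (by norm_num)
  have hpts : (S.biUnion fun x => cellRange δ x x ×ˢ cellRange δ (f x) (f x)).card ≤ S.card * 4 :=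
    Finset.card_biUnion_le_card_mul _ _ _ fun x _ => by
      rw [Finset.card_product, card_cellRange_self, card_cellRange_self]
  calc ((hitCells δ (graphOver f X)).ncard : ℝ)
      ≤ ((cellRange δ 0 δ ×ˢ cellRange δ (-M) M ∪
          S.biUnion fun x => cellRange δ x x ×ˢ cellRange δ (f x) (f x)).card : ℝ) := by
        rw [← Set.ncard_coe_finset]
        exact_mod_cast Set.ncard_le_ncard hsub (Finset.finite_toSet _)
    _ ≤ ((cellRange δ 0 δ ×ˢ cellRange δ (-M) M).card : ℝ) +
          ((S.biUnion fun x => cellRange δ x x ×ˢ cellRange δ (f x) (f x)).card : ℝ) := by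
        exact_mod_cast Finset.card_union_le _ _
    _ ≤ 4 * (2 * M / δ + 3) + 4 * S.card := by
        have : ((S.biUnion fun x => cellRange δ x x ×ˢ cellRange δ (f x) (f x)).card : ℝ)
            ≤ S.card * 4 := by exact_mod_cast hpts
        linarith

theorem card_le_boxCount2 {ι : Type*} {δ : ℝ} (hδ : 0 < δ) {E : Set (ℝ × ℝ)}
    (hE : (hitCells δ E).Finite) (s : Finset ι) (z : ι → ℝ × ℝ) (hz : ∀ i ∈ s, z i ∈ E)
    (hsep : ∀ i ∈ s, ∀ j ∈ s, i ≠ j → δ ≤ |(z i).2 - (z j).2|) :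
    s.card ≤ boxCount2 δ E := by
  rw [← Set.ncard_coe_finset, boxCount2_eq_ncard_hitCells]
  refine Set.ncard_le_ncard_of_injOn (fun i => (⌊(z i).1 / δ⌋, ⌊(z i).2 / δ⌋)) ?_ ?_ hE
  · intro i hi
    exact ⟨z i, ⟨mem_Icc_floor_div hδ _, mem_Icc_floor_div hδ _⟩, hz i hi⟩
  · intro i hi j hj hij
    by_contra hne
    have hclose := Int.abs_sub_lt_one_of_floor_eq_floor (congrArg Prod.snd hij)
    rw [← sub_div, abs_div, abs_of_pos hδ, div_lt_one hδ] at hclose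
    exact (hsep i hi j hj hne).not_gt hclose

def boxDimRatio (E : Set (ℝ × ℝ)) (δ : ℝ) : ℝ :=
  Real.log (boxCount2 δ E) / -Real.log δ

theorem upperBoxDim2_eq_limsup (E : Set (ℝ × ℝ)) :
    upperBoxDim2 E = limsup (boxDimRatio E) (𝓝[>] 0) :=
  rfl

theorem boxDimRatio_nonneg (E : Set (ℝ × ℝ)) {δ : ℝ} (hδ0 : 0 < δ) (hδ1 : δ < 1) :
    0 ≤ boxDimRatio E δ :=
  div_nonneg (Real.log_natCast_nonneg _) (neg_nonneg.mpr (Real.log_neg hδ0 hδ1).le)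

theorem boxDimRatio_le {E : Set (ℝ × ℝ)} {C δ : ℝ} (hC : 1 ≤ C) (hδ0 : 0 < δ) (hδ1 : δ < 1)
    (hcount : (boxCount2 δ E : ℝ) ≤ C / δ) :
    boxDimRatio E δ ≤ 1 + Real.log C / -Real.log δ := by
  have hlogδ : 0 < -Real.log δ := neg_pos.mpr (Real.log_neg hδ0 hδ1)
  have hlog : Real.log (boxCount2 δ E) ≤ Real.log C - Real.log δ := by
    rw [← Real.log_div (by positivity) hδ0.ne']
    rcases (Nat.cast_nonneg (boxCount2 δ E) : (0 : ℝ) ≤ _).eq_or_lt with h0 | h0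
    · rw [← h0, Real.log_zero]
      exact Real.log_nonneg ((one_le_div hδ0).mpr (by linarith))
    · exact Real.log_le_log h0 hcount
  rw [boxDimRatio, div_le_iff₀ hlogδ, add_mul, one_mul, div_mul_cancel₀ _ hlogδ.ne']
  linarith

theorem tendsto_one_add_log_div_neg_log (C : ℝ) :
    Tendsto (fun δ => 1 + Real.log C / -Real.log δ) (𝓝[>] 0) (𝓝 1) := by
  simpa using tendsto_const_nhds.add
    (tendsto_const_nhds.div_atTop (tendsto_neg_atBot_atTop.comp Real.tendsto_log_nhdsGT_zero))

section BoxCountLinear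

variable {E : Set (ℝ × ℝ)} {C : ℝ} (hC : 1 ≤ C) (hE : ∀ᶠ δ in 𝓝[>] 0, (boxCount2 δ E : ℝ) ≤ C / δ)
include hC hE

theorem boxDimRatio_eventuallyLE :
    boxDimRatio E ≤ᶠ[𝓝[>] 0] fun δ => 1 + Real.log C / -Real.log δ := by
  filter_upwards [hE, Ioo_mem_nhdsGT one_pos] with δ hδ hδ01
  exact boxDimRatio_le hC hδ01.1 hδ01.2 hδ

theorem isBoundedUnder_boxDimRatio : IsBoundedUnder (· ≤ ·) (𝓝[>] 0) (boxDimRatio E) :=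
  (tendsto_one_add_log_div_neg_log C).isBoundedUnder_le.mono_le (boxDimRatio_eventuallyLE hC hE)

theorem upperBoxDim2_le_one_of_boxCount2_le : upperBoxDim2 E ≤ 1 := by
  rw [upperBoxDim2_eq_limsup, ← (tendsto_one_add_log_div_neg_log C).limsup_eq]
  refine limsup_le_limsup (boxDimRatio_eventuallyLE hC hE) ?_
    (tendsto_one_add_log_div_neg_log C).isBoundedUnder_le
  refine isCoboundedUnder_le_of_eventually_le _ (x := 0) ?_
  filter_upwards [Ioo_mem_nhdsGT one_pos] with δ hδ
  exact boxDimRatio_nonneg E hδ.1 hδ.2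

end BoxCountLinear

theorem memCu_of_continuousOn {f : ℝ → ℝ} {X K : Set ℝ} (hK : IsCompact K) (hXK : X ⊆ K)
    (hf : ContinuousOn f K) : MemCu f X := by
  obtain ⟨M, hM⟩ := hK.exists_bound_of_continuousOn hf
  exact ⟨(hK.uniformContinuousOn_of_continuous hf).mono hXK, M, fun x hx => hM x (hXK hx)⟩

theorem upperGraphBoxDim_eq_of_tendsto {X : Set ℝ} {b : ℝ} {ι : Type*} {l : Filter ι} [l.NeBot]
    {F : ι → ℝ → ℝ} {g : ι → ℝ} (hle : ∀ f, MemCu f X → upperBoxDim2 (graphOver f X) ≤ b)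
    (hF : ∀ᶠ i in l, MemCu (F i) X ∧ g i ≤ upperBoxDim2 (graphOver (F i) X))
    (hg : Tendsto g l (𝓝 b)) : upperGraphBoxDim X = b := by
  have hbdd : ∀ d ∈ {d : ℝ | ∃ f : ℝ → ℝ, MemCu f X ∧ d = upperBoxDim2 (graphOver f X)}, d ≤ b := by
    rintro d ⟨f, hf, rfl⟩
    exact hle f hf
  obtain ⟨i, hi⟩ := hF.exists
  refine le_antisymm (csSup_le ⟨_, F i, hi.1, rfl⟩ hbdd) (le_of_tendsto hg ?_)
  filter_upwards [hF] with j hj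
  exact hj.2.trans (le_csSup ⟨b, hbdd⟩ ⟨F j, hj.1, rfl⟩)

theorem rpow_neg_sub_rpow_neg_add_one_ge {x t : ℝ} (hx : 0 < x) (ht : 0 ≤ t) :
    t / (x + 1) * (x + 1) ^ (-t) ≤ x ^ (-t) - (x + 1) ^ (-t) := by
  have hx1 : 0 < x + 1 := by linarith
  have hratio : 1 + t / (x + 1) ≤ ((x + 1) / x) ^ t := by
    have hlog := Real.one_sub_inv_le_log_of_pos (div_pos hx1 hx)
    have hinv : 1 - ((x + 1) / x)⁻¹ = 1 / (x + 1) := by field_simp; ring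
    calc 1 + t / (x + 1) = t * (1 - ((x + 1) / x)⁻¹) + 1 := by rw [hinv]; ring
      _ ≤ Real.log ((x + 1) / x) * t + 1 := by nlinarith
      _ ≤ Real.exp (Real.log ((x + 1) / x) * t) := Real.add_one_le_exp _
      _ = ((x + 1) / x) ^ t := (Real.rpow_def_of_pos (div_pos hx1 hx) t).symm
  have ha := Real.rpow_pos_of_pos hx t
  have hb := Real.rpow_pos_of_pos hx1 t
  rw [Real.div_rpow hx1.le hx.le, le_div_iff₀ ha, add_mul, one_mul, div_mul_eq_mul_div,
    ← le_sub_iff_add_le', div_le_iff₀ hx1] at hratio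
  rw [Real.rpow_neg hx.le, Real.rpow_neg hx1.le]
  field_simp
  linarith

theorem mul_rpow_neg_le_rpow_neg_sub {t : ℝ} (ht : 0 ≤ t) {n m L : ℕ} (hn : 1 ≤ n) (hnm : n < m)
    (hmL : m ≤ L) : t * (L : ℝ) ^ (-(1 + t)) ≤ (n : ℝ) ^ (-t) - (m : ℝ) ^ (-t) := by
  have hn0 : (0 : ℝ) < n := by exact_mod_cast hn
  have hnL : (n : ℝ) + 1 ≤ L := by exact_mod_cast hnm.trans_le hmL
  have hnm' : (n : ℝ) + 1 ≤ m := by exact_mod_cast hnm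
  have hL0 : (0 : ℝ) < L := by linarith
  calc t * (L : ℝ) ^ (-(1 + t)) = t / L * (L : ℝ) ^ (-t) := by
        rw [neg_add, Real.rpow_add hL0, Real.rpow_neg_one]; ring
    _ ≤ t / (n + 1) * ((n : ℝ) + 1) ^ (-t) :=
        mul_le_mul (by gcongr) (Real.rpow_le_rpow_of_nonpos (by positivity) hnL (neg_nonpos.mpr ht))
          (by positivity) (by positivity)
    _ ≤ (n : ℝ) ^ (-t) - ((n : ℝ) + 1) ^ (-t) := rpow_neg_sub_rpow_neg_add_one_ge hn0 ht
    _ ≤ (n : ℝ) ^ (-t) - (m : ℝ) ^ (-t) :=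
        sub_le_sub_left (Real.rpow_le_rpow_of_nonpos (by positivity) hnm' (neg_nonpos.mpr ht)) _

theorem one_div_rpow_rpow {n : ℝ} (hn : 0 ≤ n) (p s : ℝ) : (1 / n ^ p) ^ s = n ^ (-(p * s)) := by
  rw [one_div, Real.inv_rpow (Real.rpow_nonneg hn p), ← Real.rpow_mul hn, Real.rpow_neg hn]

def invPowSet (p : ℝ) : Set ℝ :=
  {x : ℝ | ∃ n : ℕ, 1 ≤ n ∧ x = 1 / (n : ℝ) ^ p}

theorem one_mem_invPowSet (p : ℝ) : (1 : ℝ) ∈ invPowSet p :=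
  ⟨1, le_rfl, by simp⟩

theorem invPowSet_subset_Icc {p : ℝ} (hp : 0 ≤ p) : invPowSet p ⊆ Icc 0 1 := by
  rintro x ⟨n, hn, rfl⟩
  have hn1 : (1 : ℝ) ≤ n := by exact_mod_cast hn
  exact ⟨by positivity, div_le_one_of_le₀ (Real.one_le_rpow hn1 hp) (by positivity)⟩

theorem invPowSet_subset_Icc_union {p δ : ℝ} (hp : 1 ≤ p) (hδ : 0 < δ) :
    invPowSet p ⊆ Icc 0 δ ∪ ↑((Finset.Icc 1 ⌊δ⁻¹⌋₊).image fun n : ℕ => 1 / (n : ℝ) ^ p) := by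
  rintro x ⟨n, hn, rfl⟩
  have hn1 : (1 : ℝ) ≤ n := by exact_mod_cast hn
  have hpow : 0 < (n : ℝ) ^ p := by positivity
  by_cases hsmall : 1 / (n : ℝ) ^ p ≤ δ
  · exact Or.inl ⟨by positivity, hsmall⟩
  · refine Or.inr (Finset.mem_image.mpr ⟨n, Finset.mem_Icc.mpr ⟨hn, Nat.le_floor ?_⟩, rfl⟩)
    rw [not_le, lt_div_iff₀ hpow] at hsmall
    calc (n : ℝ) ≤ (n : ℝ) ^ p := Real.self_le_rpow_of_one_le hn1 hp
      _ ≤ δ⁻¹ := by rw [← one_div, le_div_iff₀ hδ]; linarith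

section BoundedGraph

variable {p M : ℝ} (hp : 1 ≤ p) {f : ℝ → ℝ} (hM : ∀ x ∈ invPowSet p, |f x| ≤ M)
include hp hM

theorem finite_hitCells_graphOver_invPowSet {δ : ℝ} (hδ : 0 < δ) :
    (hitCells δ (graphOver f (invPowSet p))).Finite :=
  (Finset.finite_toSet _).subset
    (hitCells_graphOver_subset hδ (invPowSet_subset_Icc_union hp hδ) hM)

theorem boxCount2_graphOver_invPowSet_le {δ : ℝ} (hδ0 : 0 < δ) (hδ1 : δ ≤ 1) :
    (boxCount2 δ (graphOver f (invPowSet p)) : ℝ) ≤ (8 * M + 16) / δ := by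
  have hM0 : 0 ≤ M := (abs_nonneg _).trans (hM 1 (one_mem_invPowSet p))
  have hcount := ncard_hitCells_graphOver_le hδ0 hM0 (invPowSet_subset_Icc_union hp hδ0) hM
  have hcard : (((Finset.Icc 1 ⌊δ⁻¹⌋₊).image fun n : ℕ => 1 / (n : ℝ) ^ p).card : ℝ) ≤ δ⁻¹ :=
    calc _ ≤ ((Finset.Icc 1 ⌊δ⁻¹⌋₊).card : ℝ) := by exact_mod_cast Finset.card_image_le
      _ = ⌊δ⁻¹⌋₊ := by rw [Nat.card_Icc, Nat.add_sub_cancel]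
      _ ≤ δ⁻¹ := Nat.floor_le (by positivity)
  have h12 : 12 ≤ 12 / δ := by rw [le_div_iff₀ hδ0]; linarith
  rw [boxCount2_eq_ncard_hitCells]
  calc _ ≤ 4 * (2 * M / δ + 3) + 4 * δ⁻¹ := by linarith
    _ ≤ (8 * M + 16) / δ := by rw [inv_eq_one_div]; field_simp; linarith

theorem eventually_boxCount2_graphOver_invPowSet_le :
    ∀ᶠ δ in 𝓝[>] 0, (boxCount2 δ (graphOver f (invPowSet p)) : ℝ) ≤ (8 * M + 16) / δ := by
  filter_upwards [Ioo_mem_nhdsGT one_pos] with δ hδ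
  exact boxCount2_graphOver_invPowSet_le hp hM hδ.1 hδ.2.le

theorem upperBoxDim2_graphOver_invPowSet_le_one : upperBoxDim2 (graphOver f (invPowSet p)) ≤ 1 :=
  upperBoxDim2_le_one_of_boxCount2_le
    (by linarith [(abs_nonneg _).trans (hM 1 (one_mem_invPowSet p))])
    (eventually_boxCount2_graphOver_invPowSet_le hp hM)

end BoundedGraph

theorem memCu_rpow_invPowSet {p s : ℝ} (hp : 0 ≤ p) (hs : 0 ≤ s) :
    MemCu (· ^ s) (invPowSet p) :=
  memCu_of_continuousOn isCompact_Icc (invPowSet_subset_Icc hp)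
    (Real.continuous_rpow_const hs).continuousOn

theorem abs_rpow_le_one_of_mem_invPowSet {p s x : ℝ} (hp : 0 ≤ p) (hs : 0 ≤ s)
    (hx : x ∈ invPowSet p) : |x ^ s| ≤ 1 := by
  obtain ⟨hx0, hx1⟩ := invPowSet_subset_Icc hp hx
  rw [abs_of_nonneg (Real.rpow_nonneg hx0 s)]
  exact Real.rpow_le_one hx0 hx1 hs

section PowerGraph

variable {p s : ℝ} (hp : 1 ≤ p) (hs : 0 < s)
include hp hs

theorem le_boxCount2_graphOver_rpow {L : ℕ} (hL : 1 ≤ p * s * (L : ℝ) ^ (p * s)) :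
    (L : ℝ) ≤ boxCount2 ((L : ℝ) ^ (-(1 + 2 * (p * s)))) (graphOver (· ^ s) (invPowSet p)) := by
  set t := p * s
  have ht : 0 < t := by positivity
  have hL0 : (0 : ℝ) < L := by
    rcases (Nat.cast_nonneg L : (0 : ℝ) ≤ L).eq_or_lt with h | h
    · rw [← h, Real.zero_rpow ht.ne', mul_zero] at hL
      linarith
    · exact h
  set δ := (L : ℝ) ^ (-(1 + 2 * t))
  have hδ0 : 0 < δ := by positivity
  have hδ : δ ≤ t * (L : ℝ) ^ (-(1 + t)) := by
    have hsplit : δ = (L : ℝ) ^ (-(1 + t)) * (L : ℝ) ^ (-t) := by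
      rw [← Real.rpow_add hL0, show -(1 + t) + -t = -(1 + 2 * t) by ring]
    rw [hsplit, mul_comm t]
    refine mul_le_mul_of_nonneg_left ?_ (by positivity)
    rw [Real.rpow_neg hL0.le, inv_le_iff_one_le_mul₀ (by positivity)]
    linarith
  have hfin := finite_hitCells_graphOver_invPowSet hp
    (fun x hx => abs_rpow_le_one_of_mem_invPowSet (by linarith) hs.le hx) hδ0
  have hcard := card_le_boxCount2 hδ0 hfin (Finset.Icc 1 L)
    (fun n : ℕ => (1 / (n : ℝ) ^ p, (1 / (n : ℝ) ^ p) ^ s))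
    (fun n hn => ⟨⟨n, (Finset.mem_Icc.mp hn).1, rfl⟩, rfl⟩) ?_
  · rw [Nat.card_Icc, Nat.add_sub_cancel] at hcard
    exact_mod_cast hcard
  · intro i hi j hj hij
    obtain ⟨hi1, hiL⟩ := Finset.mem_Icc.mp hi
    obtain ⟨hj1, hjL⟩ := Finset.mem_Icc.mp hj
    simp only [one_div_rpow_rpow (Nat.cast_nonneg _)]
    rcases hij.lt_or_gt with h | h
    · exact le_abs.mpr (Or.inl (hδ.trans (mul_rpow_neg_le_rpow_neg_sub ht.le hi1 h hjL)))
    · rw [abs_sub_comm]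
      exact le_abs.mpr (Or.inl (hδ.trans (mul_rpow_neg_le_rpow_neg_sub ht.le hj1 h hiL)))

theorem le_upperBoxDim2_graphOver_rpow :
    1 / (1 + 2 * (p * s)) ≤ upperBoxDim2 (graphOver (· ^ s) (invPowSet p)) := by
  set t := p * s
  have ht : 0 < t := by positivity
  have hscales : Tendsto (fun L : ℕ => (L : ℝ) ^ (-(1 + 2 * t))) atTop (𝓝[>] 0) := by
    refine tendsto_nhdsWithin_iff.mpr
      ⟨(tendsto_rpow_neg_atTop (by positivity)).comp tendsto_natCast_atTop_atTop, ?_⟩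
    filter_upwards [eventually_ge_atTop 1] with L hL
    exact Real.rpow_pos_of_pos (by exact_mod_cast hL) _
  have hlarge : ∀ᶠ L : ℕ in atTop, 1 ≤ t * (L : ℝ) ^ t := by
    filter_upwards [((tendsto_rpow_atTop ht).comp tendsto_natCast_atTop_atTop).eventually_ge_atTop
      (1 / t)] with L hL
    rwa [Function.comp_apply, div_le_iff₀' ht] at hL
  have hratio : ∀ᶠ L : ℕ in atTop, 1 / (1 + 2 * t) ≤
      boxDimRatio (graphOver (· ^ s) (invPowSet p)) ((L : ℝ) ^ (-(1 + 2 * t))) := by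
    filter_upwards [hlarge, eventually_ge_atTop 2] with L hL hL2
    have hL2' : (2 : ℝ) ≤ L := by exact_mod_cast hL2
    have hlogL : 0 < Real.log L := Real.log_pos (by linarith)
    rw [boxDimRatio, Real.log_rpow (by linarith), neg_mul, neg_neg, le_div_iff₀ (by positivity)]
    calc 1 / (1 + 2 * t) * ((1 + 2 * t) * Real.log L) = Real.log L := by field_simp
      _ ≤ _ := Real.log_le_log (by linarith) (le_boxCount2_graphOver_rpow hp hs hL)
  rw [upperBoxDim2_eq_limsup]
  exact le_limsup_of_frequently_le (hscales.frequently hratio.frequently)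
    (isBoundedUnder_boxDimRatio (by norm_num) (eventually_boxCount2_graphOver_invPowSet_le hp
      (fun x hx => abs_rpow_le_one_of_mem_invPowSet (by linarith) hs.le hx)))

end PowerGraph

/-- for `p > 1` and `A = {1/n^p : n ≥ 1}`, `gdim̄_B A = 1`. -/
theorem upperGraphBoxDim_inv_npow_of_one_lt (p : ℝ) (hp : 1 < p) (A : Set ℝ)
    (hA : A = {x : ℝ | ∃ n : ℕ, 1 ≤ n ∧ x = 1 / (n : ℝ) ^ p}) :
    upperGraphBoxDim A = 1 := by
  change A = invPowSet p at hA
  subst hA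
  refine upperGraphBoxDim_eq_of_tendsto (l := 𝓝[>] 0) (F := fun s x => x ^ s)
    (g := fun s => 1 / (1 + 2 * (p * s))) ?_ ?_ ?_
  · rintro f ⟨-, M, hM⟩
    exact upperBoxDim2_graphOver_invPowSet_le_one hp.le hM
  · filter_upwards [self_mem_nhdsWithin] with s hs
    exact ⟨memCu_rpow_invPowSet (by linarith) hs.le, le_upperBoxDim2_graphOver_rpow hp.le hs⟩
  · refine tendsto_nhdsWithin_of_tendsto_nhds ?_
    simpa using ((tendsto_const_nhds (x := (1 : ℝ))).add
      (((tendsto_id (x := 𝓝 (0 : ℝ))).const_mul p).const_mul 2)).inv₀ (by simp)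
end
end
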